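/- arXiv:2504.10565 — 10 statements merged into one kernel-verified Lean document; each statement's English description precedes it below -/
import Mathlib

section
/- Let G be a finite group and let (G,N) be an equal order pair. If X is a subgroup of G that is not contained in N and the intersection X ∩ N is nontrivial, then (X, X ∩ N) is an equal order pair (i.e., X ∩ N is a proper, nontrivial, normal subgroup of X and every element of X outside X ∩ N has the same order as every element of its coset modulo X ∩ N). -/
/-- `(G, N)` is an *equal order pair* if `N` is a proper, nontrivial, normal subgroup of `G`
and for every `x ∈ G \ N` and every `n ∈ N`, the order of `x * n` equals the order of `x`. -/
def IsEqualOrderPair {G : Type*} [Group G] (N : Subgroup G) : Prop :=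
  N.Normal ∧ N ≠ ⊥ ∧ N ≠ ⊤ ∧ ∀ x ∉ N, ∀ n ∈ N, orderOf (x * n) = orderOf x

theorem Subgroup.orderOf_mul_eq_of_subgroupOf {G : Type*} [Group G] {N : Subgroup G}
    (hord : ∀ x ∉ N, ∀ n ∈ N, orderOf (x * n) = orderOf x) (X : Subgroup G) :
    ∀ x ∉ N.subgroupOf X, ∀ n ∈ N.subgroupOf X, orderOf (x * n) = orderOf x := by
  intro x hx n hn
  rw [← Subgroup.orderOf_coe, ← Subgroup.orderOf_coe x]
  exact hord x hx n hn

theorem stmt0_general {G : Type*} [Group G] (N : Subgroup G)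
    (hEOP : IsEqualOrderPair N) (X : Subgroup G) (hX : ¬ X ≤ N) (hXN : X ⊓ N ≠ ⊥) :
    IsEqualOrderPair (N.subgroupOf X) := by
  obtain ⟨hnormal, -, -, hord⟩ := hEOP
  refine ⟨hnormal.subgroupOf X, ?_, ?_, Subgroup.orderOf_mul_eq_of_subgroupOf hord X⟩
  · rwa [Ne, Subgroup.subgroupOf_eq_bot, disjoint_iff, inf_comm]
  · rwa [Ne, Subgroup.subgroupOf_eq_top]

theorem stmt0 {G : Type*} [Group G] [Finite G] (N : Subgroup G)
    (hEOP : IsEqualOrderPair N) (X : Subgroup G) (hX : ¬ X ≤ N) (hXN : X ⊓ N ≠ ⊥) :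
    IsEqualOrderPair (N.subgroupOf X) :=
  stmt0_general N hEOP X hX hXN
end

section
/- Let G be a finite group, N a normal subgroup of G, and x ∈ G \ N an element such that the order of x·n equals the order of x for all n ∈ N. Let m be the order of the coset xN as an element of G/N. Then every prime dividing the order of x divides m; in particular, if y ∈ N commutes with x and y has prime order p, then p divides m. -/
theorem stmt1 {G : Type*} [Group G] [Finite G] (N : Subgroup G) [N.Normal]
    (x : G) (hx : x ∉ N) (h : ∀ n ∈ N, orderOf (x * n) = orderOf x)
    (m : ℕ) (hm : m = orderOf (QuotientGroup.mk x : G ⧸ N)) :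
    (∀ q : ℕ, q.Prime → q ∣ orderOf x → q ∣ m) ∧
      ∀ y ∈ N, Commute x y → ∀ p : ℕ, p.Prime → orderOf y = p → p ∣ m := by
  have hk : 0 < orderOf x := orderOf_pos x
  have hxmN : x ^ m ∈ N := by
    rw [← QuotientGroup.eq_one_iff, QuotientGroup.mk_pow, hm]
    exact pow_orderOf_eq_one _
  have part1 : ∀ q : ℕ, q.Prime → q ∣ orderOf x → q ∣ m := by
    intro q hq hqk
    by_contra hqm
    haveI : Fact q.Prime := ⟨hq⟩
    have hmne : (m : ZMod q) ≠ 0 := by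
      simpa [ZMod.natCast_eq_zero_iff] using hqm
    set s : ℕ := (-(m : ZMod q)⁻¹).val with hs
    have hdiv : q ∣ 1 + m * s := by
      have : ((1 + m * s : ℕ) : ZMod q) = 0 := by
        push_cast [hs]
        rw [ZMod.natCast_val, ZMod.cast_id]
        field_simp
        ring
      exact (ZMod.natCast_eq_zero_iff _ _).mp this
    have hnN : x ^ (m * s) ∈ N := by
      rw [pow_mul]; exact pow_mem hxmN s
    have hord := h _ hnN
    rw [← pow_succ'] at hord
    have hgcd : Nat.gcd (orderOf x) (m * s + 1) = 1 := by
      have := orderOf_pow (n := m * s + 1) x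
      rw [hord] at this
      exact (Nat.div_eq_self.mp this.symm).resolve_left hk.ne'
    have : q ∣ 1 := by
      rw [← hgcd]
      exact Nat.dvd_gcd hqk (by rwa [Nat.add_comm] at hdiv)
    exact hq.one_lt.ne' (Nat.dvd_one.mp this)
  refine ⟨part1, ?_⟩
  intro y hyN hc p hp hyp
  apply part1 p hp
  have hord := h y hyN
  have h1 : (x * y) ^ orderOf x = 1 := by rw [← hord]; exact pow_orderOf_eq_one _
  rw [hc.mul_pow, pow_orderOf_eq_one, one_mul] at h1
  rw [← hyp]
  exact orderOf_dvd_of_pow_eq_one h1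
end

section
/- Suppose that (G₁,N₁) and (G₂,N₂) are equal order pairs of finite groups such that: every element of G₁ \ N₁ has order m₁, every element of G₂ \ N₂ has order m₂, the order of every element of N₂ divides m₁, and the order of every element of N₁ divides m₂. Then (G₁ × G₂, N₁ × N₂) is an equal order pair. -/
namespace Subgroup

variable {G₁ G₂ : Type*} [Group G₁] [Group G₂] {H : Subgroup G₁} {K : Subgroup G₂}

theorem prod_ne_bot_of_left (hH : H ≠ ⊥) : H.prod K ≠ ⊥ :=
  fun h ↦ hH (prod_eq_bot_iff.1 h).1

theorem prod_ne_top_of_left (hH : H ≠ ⊤) : H.prod K ≠ ⊤ := by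
  refine fun h ↦ hH (H.eq_top_iff'.2 fun x ↦ ?_)
  exact (mem_prod.1 (h ▸ mem_top (x, (1 : G₂)))).1

end Subgroup

theorem Prod.orderOf_mk_of_dvd_left {α β : Type*} [Monoid α] [Monoid β] {a : α} {b : β}
    (h : orderOf b ∣ orderOf a) : orderOf (a, b) = orderOf a := by
  rw [Prod.orderOf_mk, Nat.lcm_eq_left h]

theorem Prod.orderOf_mk_of_dvd_right {α β : Type*} [Monoid α] [Monoid β] {a : α} {b : β}
    (h : orderOf a ∣ orderOf b) : orderOf (a, b) = orderOf b := by
  rw [Prod.orderOf_mk, Nat.lcm_eq_right h]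

namespace IsEqualOrderPair

variable {G₁ G₂ : Type*} [Group G₁] [Group G₂] {N₁ : Subgroup G₁} {N₂ : Subgroup G₂}

theorem prod (h₁ : IsEqualOrderPair N₁) (h₂ : IsEqualOrderPair N₂)
    (hdvd₂ : ∀ x ∉ N₁, ∀ n ∈ N₂, orderOf n ∣ orderOf x)
    (hdvd₁ : ∀ x ∉ N₂, ∀ n ∈ N₁, orderOf n ∣ orderOf x) :
    IsEqualOrderPair (N₁.prod N₂) := by
  obtain ⟨hN₁, hbot₁, htop₁, horder₁⟩ := h₁
  obtain ⟨hN₂, -, -, horder₂⟩ := h₂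
  refine ⟨Subgroup.prod_normal N₁ N₂, Subgroup.prod_ne_bot_of_left hbot₁,
    Subgroup.prod_ne_top_of_left htop₁, ?_⟩
  rintro ⟨x₁, x₂⟩ hx ⟨n₁, n₂⟩ hn
  simp only [Subgroup.mem_prod] at hx hn
  obtain ⟨hn₁, hn₂⟩ := hn
  change orderOf (x₁ * n₁, x₂ * n₂) = orderOf (x₁, x₂)
  by_cases hx₁ : x₁ ∈ N₁
  · have hx₂ : x₂ ∉ N₂ := fun hx₂ ↦ hx ⟨hx₁, hx₂⟩
    have hxn₂ := horder₂ x₂ hx₂ n₂ hn₂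
    rw [Prod.orderOf_mk_of_dvd_right (hxn₂ ▸ hdvd₁ x₂ hx₂ _ (N₁.mul_mem hx₁ hn₁)),
      Prod.orderOf_mk_of_dvd_right (hdvd₁ x₂ hx₂ x₁ hx₁), hxn₂]
  have hxn₁ := horder₁ x₁ hx₁ n₁ hn₁
  by_cases hx₂ : x₂ ∈ N₂
  · rw [Prod.orderOf_mk_of_dvd_left (hxn₁ ▸ hdvd₂ x₁ hx₁ _ (N₂.mul_mem hx₂ hn₂)),
      Prod.orderOf_mk_of_dvd_left (hdvd₂ x₁ hx₁ x₂ hx₂), hxn₁]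
  rw [Prod.orderOf_mk, Prod.orderOf_mk, hxn₁, horder₂ x₂ hx₂ n₂ hn₂]

end IsEqualOrderPair

theorem stmt6_general {G₁ G₂ : Type*} [Group G₁] [Group G₂]
    (N₁ : Subgroup G₁) (N₂ : Subgroup G₂)
    (h₁ : IsEqualOrderPair N₁) (h₂ : IsEqualOrderPair N₂) (m₁ m₂ : ℕ)
    (hm₁ : ∀ x ∉ N₁, orderOf x = m₁) (hm₂ : ∀ x ∉ N₂, orderOf x = m₂)
    (hexp₂ : ∀ n ∈ N₂, orderOf n ∣ m₁) (hexp₁ : ∀ n ∈ N₁, orderOf n ∣ m₂) :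
    IsEqualOrderPair (N₁.prod N₂) :=
  h₁.prod h₂ (fun x hx n hn ↦ hm₁ x hx ▸ hexp₂ n hn) (fun x hx n hn ↦ hm₂ x hx ▸ hexp₁ n hn)

theorem stmt6 {G₁ G₂ : Type*} [Group G₁] [Group G₂] [Finite G₁] [Finite G₂]
    (N₁ : Subgroup G₁) (N₂ : Subgroup G₂)
    (h₁ : IsEqualOrderPair N₁) (h₂ : IsEqualOrderPair N₂) (m₁ m₂ : ℕ)
    (hm₁ : ∀ x ∉ N₁, orderOf x = m₁) (hm₂ : ∀ x ∉ N₂, orderOf x = m₂)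
    (hexp₂ : ∀ n ∈ N₂, orderOf n ∣ m₁) (hexp₁ : ∀ n ∈ N₁, orderOf n ∣ m₂) :
    IsEqualOrderPair (N₁.prod N₂) :=
  stmt6_general N₁ N₂ h₁ h₂ m₁ m₂ hm₁ hm₂ hexp₂ hexp₁
end

section
/- Let G be a finite group with a normal subgroup K and a subgroup H such that K ∩ H = 1, G = KH, and every nontrivial element of H commutes with no nontrivial element of K (so G is a Frobenius group with kernel K and complement H). Let N be a normal subgroup of G with K properly contained in N and N properly contained in G, and set M = H ∩ N. Then (H, M) is an equal order pair if and only if (G, N) is an equal order pair. -/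
theorem IsConj.orderOf_eq {G : Type*} [Group G] {g g' : G} (h : IsConj g g') :
    orderOf g = orderOf g' := by
  obtain ⟨c, rfl⟩ := isConj_iff.mp h
  exact SemiconjBy.orderOf_eq c (by simp [SemiconjBy, mul_assoc])

namespace Subgroup

variable {G : Type*} [Group G]

theorem isConj_mul_of_forall_ne_commute {K : Subgroup G} [hK : K.Normal] [Finite K] {g : G}
    (hg : ∀ k ∈ K, k ≠ 1 → g * k ≠ k * g) {k : G} (hk : k ∈ K) : IsConj g (k * g) := by
  let f : K → K := fun a => ⟨(a : G)⁻¹ * (g * a * g⁻¹),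
    K.mul_mem (K.inv_mem a.2) (hK.conj_mem _ a.2 g)⟩
  have hf : f.Injective := by
    intro a b hab
    have hab' : (a : G)⁻¹ * (g * a * g⁻¹) = (b : G)⁻¹ * (g * b * g⁻¹) :=
      congrArg Subtype.val hab
    have hcomm : g * ((b : G) * (a : G)⁻¹) = ((b : G) * (a : G)⁻¹) * g :=
      calc g * ((b : G) * (a : G)⁻¹)
          = b * ((b : G)⁻¹ * (g * b * g⁻¹)) * (g * (a : G)⁻¹) := by group
        _ = b * ((a : G)⁻¹ * (g * a * g⁻¹)) * (g * (a : G)⁻¹) := by rw [hab']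
        _ = ((b : G) * (a : G)⁻¹) * g := by group
    by_contra hne
    exact hg _ (K.mul_mem b.2 (K.inv_mem a.2))
      (fun h => hne (Subtype.ext (mul_inv_eq_one.mp h).symm)) hcomm
  obtain ⟨a, ha⟩ := Finite.surjective_of_injective hf ⟨k, hk⟩
  refine isConj_iff.mpr ⟨(a : G)⁻¹, ?_⟩
  have ha' : (a : G)⁻¹ * (g * a * g⁻¹) = k := congrArg Subtype.val ha
  rw [← ha']
  group

theorem orderOf_mul_of_forall_ne_commute {K : Subgroup G} [K.Normal] [Finite K] {g : G}
    (hg : ∀ k ∈ K, k ≠ 1 → g * k ≠ k * g) {k : G} (hk : k ∈ K) :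
    orderOf (k * g) = orderOf g :=
  (isConj_mul_of_forall_ne_commute hg hk).orderOf_eq.symm

theorem forall_orderOf_mul_subgroupOf_iff {H N : Subgroup G} :
    (∀ x ∉ N.subgroupOf H, ∀ n ∈ N.subgroupOf H, orderOf (x * n) = orderOf x) ↔
      ∀ x ∈ H, x ∉ N → ∀ n ∈ H, n ∈ N → orderOf (x * n) = orderOf x := by
  simp only [Subtype.forall, mem_subgroupOf, ← orderOf_coe, coe_mul]

variable {K H N : Subgroup G}

theorem subgroupOf_ne_bot_of_lt [K.Normal] (hG : K ⊔ H = ⊤) (hKN : K < N) :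
    N.subgroupOf H ≠ ⊥ := by
  obtain ⟨y, hyN, hyK⟩ := SetLike.exists_of_lt hKN
  obtain ⟨k, hk, h, hh, rfl⟩ := mem_sup_of_normal_left.mp (hG ▸ mem_top y)
  have hhN : h ∈ N := (mul_mem_cancel_left (hKN.le hk)).mp hyN
  have hh1 : h ≠ 1 := by
    rintro rfl
    exact hyK (by simpa using hk)
  rw [Ne, subgroupOf_eq_bot, disjoint_def]
  exact fun hH => hh1 (hH hhN hh)

theorem subgroupOf_ne_top_of_le (hG : K ⊔ H = ⊤) (hKN : K ≤ N) (hN : N ≠ ⊤) :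
    N.subgroupOf H ≠ ⊤ := by
  rw [Ne, subgroupOf_eq_top]
  exact fun hHN => hN (top_le_iff.mp (hG ▸ sup_le hKN hHN))

theorem orderOf_mul_eq_of_sup_eq_top [hK : K.Normal] [Finite K] (hG : K ⊔ H = ⊤)
    (hFrob : ∀ h ∈ H, h ≠ 1 → ∀ k ∈ K, k ≠ 1 → h * k ≠ k * h) (hKN : K ≤ N)
    (hH : ∀ x ∈ H, x ∉ N → ∀ m ∈ H, m ∈ N → orderOf (x * m) = orderOf x) :
    ∀ x ∉ N, ∀ n ∈ N, orderOf (x * n) = orderOf x := by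
  intro x hx n hn
  obtain ⟨k, hk, h, hh, rfl⟩ := mem_sup_of_normal_left.mp (hG ▸ mem_top x)
  obtain ⟨k', hk', m, hm, rfl⟩ := mem_sup_of_normal_left.mp (hG ▸ mem_top n)
  have hmN : m ∈ N := (mul_mem_cancel_left (hKN hk')).mp hn
  have hhN : h ∉ N := fun h' => hx (N.mul_mem (hKN hk) h')
  have hhmN : h * m ∉ N := fun h' => hhN ((mul_mem_cancel_right hmN).mp h')
  have hne : ∀ {y : G}, y ∉ N → y ≠ 1 := fun hy e => hy (e ▸ N.one_mem)
  have hk'' : k * (h * k' * h⁻¹) ∈ K := K.mul_mem hk (hK.conj_mem _ hk' h)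
  calc orderOf (k * h * (k' * m)) = orderOf (k * (h * k' * h⁻¹) * (h * m)) := by group
    _ = orderOf (h * m) := orderOf_mul_of_forall_ne_commute
          (hFrob _ (H.mul_mem hh hm) (hne hhmN)) hk''
    _ = orderOf h := hH h hh hhN m hm hmN
    _ = orderOf (k * h) := (orderOf_mul_of_forall_ne_commute (hFrob h hh (hne hhN)) hk).symm

end Subgroup

theorem IsEqualOrderPair.subgroupOf {G : Type*} [Group G] {N : Subgroup G}
    (hN : IsEqualOrderPair N) (H : Subgroup G) (hbot : N.subgroupOf H ≠ ⊥)
    (htop : N.subgroupOf H ≠ ⊤) : IsEqualOrderPair (N.subgroupOf H) := by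
  obtain ⟨hNormal, -, -, hord⟩ := hN
  exact ⟨inferInstance, hbot, htop, Subgroup.forall_orderOf_mul_subgroupOf_iff.mpr
    fun x _ hx n _ hn => hord x hx n hn⟩

theorem stmt7_general {G : Type*} [Group G] [Finite G] (K H N : Subgroup G)
    [K.Normal] [N.Normal]
    (hG : K ⊔ H = ⊤)
    (hFrob : ∀ h ∈ H, h ≠ 1 → ∀ k ∈ K, k ≠ 1 → h * k ≠ k * h)
    (hKN : K < N) (hNG : N < ⊤) :
    IsEqualOrderPair (N.subgroupOf H) ↔ IsEqualOrderPair N := by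
  constructor
  · rintro ⟨-, -, -, hord⟩
    exact ⟨inferInstance, ne_bot_of_gt hKN, hNG.ne, Subgroup.orderOf_mul_eq_of_sup_eq_top hG hFrob
      hKN.le (Subgroup.forall_orderOf_mul_subgroupOf_iff.mp hord)⟩
  · exact fun hN => hN.subgroupOf H (Subgroup.subgroupOf_ne_bot_of_lt hG hKN)
      (Subgroup.subgroupOf_ne_top_of_le hG hKN.le hNG.ne)

theorem stmt7 {G : Type*} [Group G] [Finite G] (K H N : Subgroup G)
    [K.Normal] [N.Normal]
    (hKH : K ⊓ H = ⊥) (hG : K ⊔ H = ⊤)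
    (hFrob : ∀ h ∈ H, h ≠ 1 → ∀ k ∈ K, k ≠ 1 → h * k ≠ k * h)
    (hKN : K < N) (hNG : N < ⊤) :
    IsEqualOrderPair (N.subgroupOf H) ↔ IsEqualOrderPair N :=
  stmt7_general K H N hG hFrob hKN hNG
end

section
/- Let G be a finite nilpotent group having a subgroup N such that (G,N) is an equal order pair. Then there exists a prime p such that G is a p-group (the order of G is a power of p). -/
theorem Commute.eq_one_of_orderOf_mul_eq {G : Type*} [Group G] {x y : G} (hxy : Commute x y)
    (hcop : (orderOf x).Coprime (orderOf y)) (h : orderOf (x * y) = orderOf x) : y = 1 := by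
  rw [hxy.orderOf_mul_eq_mul_orderOf_of_coprime hcop] at h
  have hdvd : orderOf y ∣ orderOf x := ⟨orderOf x, by rw [mul_comm, h]⟩
  exact orderOf_eq_one_iff.mp (hcop.symm.eq_one_of_dvd hdvd)

namespace Subgroup

variable {G : Type*} [Group G] [Finite G] {H : Subgroup G}

theorem exists_sylow_not_le (hH : H ≠ ⊤) :
    ∃ (p : ℕ) (_ : Fact p.Prime) (P : Sylow p G), ¬(P : Subgroup G) ≤ H := by
  by_contra! hle
  refine hH (H.card_eq_iff_eq_top.mp (Nat.dvd_antisymm (card_subgroup_dvd_card H) ?_))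
  refine (Nat.factorization_prime_le_iff_dvd Nat.card_pos.ne' Nat.card_pos.ne').mp fun p hp => ?_
  have := Fact.mk hp
  obtain ⟨P⟩ : Nonempty (Sylow p G) := inferInstance
  rw [← hp.pow_dvd_iff_le_factorization Nat.card_pos.ne', ← P.card_eq_multiplicity]
  exact card_dvd_of_le (hle p this P)

theorem exists_sylow_inf_ne_bot (hH : H ≠ ⊥) :
    ∃ (p : ℕ) (_ : Fact p.Prime) (P : Sylow p G), (P : Subgroup G) ⊓ H ≠ ⊥ := by
  have hcard : Nat.card H ≠ 1 := by rwa [Ne, card_eq_one]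
  have hp : (Nat.card H).minFac.Prime := Nat.minFac_prime hcard
  have := Fact.mk hp
  obtain ⟨g, hg⟩ := exists_prime_orderOf_dvd_card' (G := H) _ (Nat.minFac_dvd _)
  rw [← orderOf_submonoid] at hg
  have hgp : IsPGroup (Nat.card H).minFac (zpowers (g : G)) :=
    IsPGroup.iff_card.mpr ⟨1, by rw [Nat.card_zpowers, hg, pow_one]⟩
  obtain ⟨P, hP⟩ := hgp.exists_le_sylow
  refine ⟨_, this, P, fun h0 => hp.one_lt.ne' ?_⟩
  rw [← hg, orderOf_eq_one_iff]
  exact (eq_bot_iff_forall _).mp h0 g ⟨hP (mem_zpowers _), g.2⟩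

end Subgroup

namespace Sylow

variable {G : Type*} [Group G] [Finite G] {p q : ℕ} [Fact p.Prime] [Fact q.Prime]

theorem coprime_orderOf_of_ne (hpq : p ≠ q) (P : Sylow p G) (Q : Sylow q G) {x y : G}
    (hx : x ∈ P) (hy : y ∈ Q) : (orderOf x).Coprime (orderOf y) :=
  (IsPGroup.coprime_card_of_ne p q hpq _ _ P.isPGroup' Q.isPGroup').of_dvd
    ((P : Subgroup G).orderOf_dvd_natCard hx) ((Q : Subgroup G).orderOf_dvd_natCard hy)

variable [Group.IsNilpotent G]

theorem commute_of_ne (hpq : p ≠ q) (P : Sylow p G) (Q : Sylow q G) {x y : G}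
    (hx : x ∈ P) (hy : y ∈ Q) : Commute x y :=
  Subgroup.commute_of_normal_of_disjoint _ _ inferInstance inferInstance
    (IsPGroup.disjoint_of_ne p q hpq _ _ P.isPGroup' Q.isPGroup') x y hx hy

theorem prime_eq_of_not_le_of_inf_ne_bot {N : Subgroup G}
    (hN : ∀ x ∉ N, ∀ n ∈ N, orderOf (x * n) = orderOf x) (P : Sylow p G) (Q : Sylow q G)
    (hP : ¬(P : Subgroup G) ≤ N) (hQ : (Q : Subgroup G) ⊓ N ≠ ⊥) : p = q := by
  by_contra hpq
  obtain ⟨x, hxP, hxN⟩ := Set.not_subset.mp hP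
  obtain ⟨⟨n, hnQ, hnN⟩, hn⟩ := Subgroup.ne_bot_iff_exists_ne_one.mp hQ
  refine hn (Subtype.ext ?_)
  exact (commute_of_ne hpq P Q hxP hnQ).eq_one_of_orderOf_mul_eq
    (coprime_orderOf_of_ne hpq P Q hxP hnQ) (hN x hxN n hnN)

end Sylow

theorem stmt8 {G : Type*} [Group G] [Finite G] [Group.IsNilpotent G]
    (N : Subgroup G) (h : IsEqualOrderPair N) :
    ∃ p : ℕ, p.Prime ∧ ∃ n : ℕ, Nat.card G = p ^ n := by
  obtain ⟨s, hs, P, hP⟩ := Subgroup.exists_sylow_not_le h.2.2.1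
  obtain ⟨r, _, R, hR⟩ := Subgroup.exists_sylow_inf_ne_bot h.2.1
  have hsr : s = r := Sylow.prime_eq_of_not_le_of_inf_ne_bot h.2.2.2 P R hP hR
  refine ⟨s, hs.out, _, Nat.eq_prime_pow_of_unique_prime_dvd Nat.card_pos.ne' fun {t} ht htG => ?_⟩
  have := Fact.mk ht
  obtain ⟨T⟩ : Nonempty (Sylow t G) := inferInstance
  by_cases hT : (T : Subgroup G) ≤ N
  · refine (Sylow.prime_eq_of_not_le_of_inf_ne_bot h.2.2.2 P T hP ?_).symm
    rw [inf_eq_left.mpr hT]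
    exact T.ne_bot_of_dvd_card htG
  · exact (Sylow.prime_eq_of_not_le_of_inf_ne_bot h.2.2.2 T R hT hR).trans hsr.symm
end

section
/- Let p be a prime, G a finite p-group, and N a proper nontrivial subgroup of G contained in the center of G. Then (G,N) is an equal order pair if and only if there exists a positive integer i such that every element g ∈ G with g^(p^(i-1)) = 1 lies in N, and every element n ∈ N satisfies n^(p^i) = 1. -/
/-!
Since `N` is central, `(x * n) ^ m = x ^ m * n ^ m` for `n ∈ N`. Let `p ^ i` be the exponent of `N`.
If `x ^ p ^ (i - 1) = 1` forces `x ∈ N`, then for `x ∉ N` neither `x` nor `x * n` is killed by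
`p ^ k` with `k < i`, while for `k ≥ i` the factor `n ^ p ^ k` is trivial; so `x` and `x * n` are
killed by the same powers of `p` and have the same order. Conversely, if `g ∉ N` satisfies
`g ^ p ^ (i - 1) = 1` and `n₀ ∈ N` has order `p ^ i`, then `(g * n₀) ^ p ^ (i - 1) ≠ 1`.
-/

theorem Subgroup.normal_of_le_center {G : Type*} [Group G] {N : Subgroup G}
    (hle : N ≤ Subgroup.center G) : N.Normal :=
  ⟨fun n hn g => by rwa [Subgroup.mem_center_iff.mp (hle hn) g, mul_inv_cancel_right]⟩

section Monoid

variable {M : Type*} [Monoid M] {p : ℕ}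

theorem pow_prime_pow_eq_one_of_le {x : M} {k l : ℕ} (hx : x ^ p ^ k = 1) (hkl : k ≤ l) :
    x ^ p ^ l = 1 := by
  obtain ⟨c, hc⟩ := pow_dvd_pow p hkl
  rw [hc, pow_mul, hx, one_pow]

theorem orderOf_eq_of_forall_pow_prime_pow_eq_one_iff {x y : M} {a b : ℕ}
    (hx : orderOf x = p ^ a) (hy : orderOf y = p ^ b)
    (h : ∀ k, x ^ p ^ k = 1 ↔ y ^ p ^ k = 1) : orderOf x = orderOf y := by
  apply Nat.dvd_antisymm
  · rw [orderOf_dvd_iff_pow_eq_one, hy, h, ← hy, pow_orderOf_eq_one]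
  · rw [orderOf_dvd_iff_pow_eq_one, hx, ← h, ← hx, pow_orderOf_eq_one]

end Monoid

theorem IsPGroup.orderOf_eq_of_forall_pow_prime_pow_eq_one_iff {G : Type*} [Group G] {p : ℕ}
    [Fact p.Prime] (hG : IsPGroup p G) {x y : G} (h : ∀ k, x ^ p ^ k = 1 ↔ y ^ p ^ k = 1) :
    orderOf x = orderOf y := by
  obtain ⟨a, ha⟩ := IsPGroup.iff_orderOf.mp hG x
  obtain ⟨b, hb⟩ := IsPGroup.iff_orderOf.mp hG y
  exact _root_.orderOf_eq_of_forall_pow_prime_pow_eq_one_iff ha hb h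

theorem IsPGroup.exists_orderOf_eq_exponent {G : Type*} [Group G] [Finite G] {p : ℕ}
    [hp : Fact p.Prime] (hG : IsPGroup p G) : ∃ g : G, orderOf g = Monoid.exponent G := by
  obtain ⟨i, hi⟩ := hG.exists_exponent_eq_pow
  obtain ⟨g, hg⟩ := hp.out.exists_orderOf_eq_pow_factorization_exponent G
  exact ⟨g, by simp [hg, hi, hp.out]⟩

section Central

variable {G : Type*} [Group G] {N : Subgroup G} {p i : ℕ}

theorem mem_of_pow_eq_one_of_orderOf_mul_eq
    (hN : ∀ x ∉ N, ∀ n ∈ N, orderOf (x * n) = orderOf x) {n₀ : G} (hn₀N : n₀ ∈ N)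
    (hn₀ : n₀ ∈ Subgroup.center G) {m : ℕ} (hm : n₀ ^ m ≠ 1) {g : G} (hg : g ^ m = 1) :
    g ∈ N := by
  by_contra hgN
  have hgn₀ : (g * n₀) ^ m = 1 := by
    rwa [← orderOf_dvd_iff_pow_eq_one, hN g hgN n₀ hn₀N, orderOf_dvd_iff_pow_eq_one]
  have hc : Commute g n₀ := Subgroup.mem_center_iff.mp hn₀ g
  rw [hc.mul_pow, hg, one_mul] at hgn₀
  exact hm hgn₀

theorem mul_pow_prime_pow_eq_one_iff (hle : N ≤ Subgroup.center G)
    (hN₁ : ∀ g : G, g ^ p ^ (i - 1) = 1 → g ∈ N) (hN₂ : ∀ n ∈ N, n ^ p ^ i = 1)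
    {x : G} (hx : x ∉ N) {n : G} (hn : n ∈ N) (k : ℕ) :
    (x * n) ^ p ^ k = 1 ↔ x ^ p ^ k = 1 := by
  rcases lt_or_ge k i with hki | hik
  · have hkill : ∀ g ∉ N, g ^ p ^ k ≠ 1 := fun g hg hgk =>
      hg (hN₁ g (pow_prime_pow_eq_one_of_le hgk (by omega)))
    have hxn : x * n ∉ N := fun hxn => hx (by simpa using N.mul_mem hxn (N.inv_mem hn))
    exact iff_of_false (hkill _ hxn) (hkill x hx)
  · have hc : Commute x n := Subgroup.mem_center_iff.mp (hle hn) x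
    rw [hc.mul_pow, pow_prime_pow_eq_one_of_le (hN₂ n hn) hik, mul_one]

end Central

theorem stmt9 {G : Type*} [Group G] [Finite G] (p : ℕ) (hp : p.Prime)
    (hG : IsPGroup p G) (N : Subgroup G) (hle : N ≤ Subgroup.center G)
    (hbot : N ≠ ⊥) (htop : N ≠ ⊤) :
    IsEqualOrderPair N ↔
      ∃ i : ℕ, 0 < i ∧ (∀ g : G, g ^ p ^ (i - 1) = 1 → g ∈ N) ∧
        ∀ n ∈ N, n ^ p ^ i = 1 := by
  have := Fact.mk hp
  constructor
  · rintro ⟨-, -, -, hN⟩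
    obtain ⟨i, hi⟩ := (hG.to_subgroup N).exists_exponent_eq_pow
    obtain ⟨⟨n₀, hn₀N⟩, hn₀⟩ := (hG.to_subgroup N).exists_orderOf_eq_exponent
    rw [Subgroup.orderOf_mk, hi] at hn₀
    have hN₂ : ∀ n ∈ N, n ^ p ^ i = 1 := fun n hn => by
      simpa [hi] using congrArg Subtype.val (Monoid.pow_exponent_eq_one (⟨n, hn⟩ : N))
    have hi₀ : 0 < i := by
      obtain ⟨a, haN, ha⟩ := (N.bot_or_exists_ne_one).resolve_left hbot
      exact Nat.pos_of_ne_zero fun hi₀ => ha (by simpa [hi₀] using hN₂ a haN)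
    refine ⟨i, hi₀, fun g hg => ?_, hN₂⟩
    refine mem_of_pow_eq_one_of_orderOf_mul_eq hN hn₀N (hle hn₀N) ?_ hg
    exact pow_ne_one_of_lt_orderOf (pow_ne_zero _ hp.ne_zero)
      (hn₀ ▸ Nat.pow_lt_pow_right hp.one_lt (by omega))
  · rintro ⟨i, -, hN₁, hN₂⟩
    refine ⟨Subgroup.normal_of_le_center hle, hbot, htop, fun x hx n hn => ?_⟩
    exact hG.orderOf_eq_of_forall_pow_prime_pow_eq_one_iff
      (mul_pow_prime_pow_eq_one_iff hle hN₁ hN₂ hx hn)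
end

section
/- Let (G,N) be an equal order pair. Then either N is nilpotent, or every nilpotent normal subgroup of G is contained in N. Moreover, if N is nilpotent and there exists a nilpotent normal subgroup of G not contained in N, then there is a prime p such that every nilpotent normal subgroup of G is a p-group; equivalently, if N is properly contained in the Fitting subgroup F(G), then F(G) has prime-power order. -/
theorem IsPGroup.eq_of_ne_bot {G : Type*} [Group G] {p q : ℕ} [Fact p.Prime] [Fact q.Prime]
    {H : Subgroup G} (hp : IsPGroup p H) (hq : IsPGroup q H) (hH : H ≠ ⊥) : p = q := by
  by_contra hne
  exact hH (disjoint_self.mp (IsPGroup.disjoint_of_ne p q hne H H hp hq))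

theorem Subgroup.eq_top_of_forall_exists_sylow_le {G : Type*} [Group G] [Finite G]
    (K : Subgroup G) (h : ∀ (p : ℕ) [Fact p.Prime], ∃ P : Sylow p G, ↑P ≤ K) : K = ⊤ := by
  refine K.eq_top_of_le_card (Nat.le_of_dvd Nat.card_pos ?_)
  refine (Nat.factorization_prime_le_iff_dvd Nat.card_pos.ne' Nat.card_pos.ne').mp fun p hp ↦ ?_
  have : Fact p.Prime := ⟨hp⟩
  obtain ⟨P, hPK⟩ := h p
  have hdvd : p ^ (Nat.card G).factorization p ∣ Nat.card K :=
    P.card_eq_multiplicity ▸ Subgroup.card_dvd_of_le hPK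
  exact (hp.pow_dvd_iff_le_factorization Nat.card_pos.ne').mp hdvd

-- Sylow subgroups of a nilpotent group are normal, hence characteristic.
theorem Sylow.normal_map_subtype_of_isNilpotent {G : Type*} [Group G] [Finite G]
    {M : Subgroup G} [M.Normal] [Group.IsNilpotent M] {p : ℕ} [Fact p.Prime] (Q : Sylow p M) :
    ((Q : Subgroup M).map M.subtype).Normal :=
  have := Q.characteristic_of_normal
    (Q.normal_of_normalizerCondition Group.normalizerCondition_of_isNilpotent)
  inferInstance

theorem Subgroup.exists_normal_isPGroup_not_le {G : Type*} [Group G] [Finite G]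
    {M N : Subgroup G} [M.Normal] [Group.IsNilpotent M] (hMN : ¬ M ≤ N) :
    ∃ p, p.Prime ∧ ∃ P : Subgroup G, P.Normal ∧ IsPGroup p P ∧ ¬ P ≤ N := by
  by_contra! h
  refine hMN (Subgroup.subgroupOf_eq_top.mp (eq_top_of_forall_exists_sylow_le _ fun p _ ↦ ?_))
  obtain ⟨Q⟩ : Nonempty (Sylow p M) := inferInstance
  refine ⟨Q, fun x hx ↦ ?_⟩
  exact h p Fact.out _ Q.normal_map_subtype_of_isNilpotent (Q.isPGroup'.map _) ⟨x, hx, rfl⟩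

namespace IsEqualOrderPair

variable {G : Type*} [Group G] {N : Subgroup G}

theorem isPGroup_of_mem_normal_isPGroup (h : IsEqualOrderPair N) {P : Subgroup G} [P.Normal]
    {p : ℕ} (hP : IsPGroup p P) {x : G} (hxP : x ∈ P) (hxN : x ∉ N) : IsPGroup p N := by
  intro n
  obtain ⟨k, hk⟩ := hP ⟨x, hxP⟩
  have hxk : x ^ p ^ k = 1 := by simpa using congrArg Subtype.val hk
  have hxnk : (x * n) ^ p ^ k = 1 := by
    rw [← orderOf_dvd_iff_pow_eq_one, h.2.2.2 x hxN n n.2, orderOf_dvd_iff_pow_eq_one, hxk]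
  have hn_eq : ((n : G) : G ⧸ P) = ((x * n : G) : G ⧸ P) := by
    rw [QuotientGroup.mk_mul, (QuotientGroup.eq_one_iff x).mpr hxP, one_mul]
  have hnkP : (n : G) ^ p ^ k ∈ P := by
    rw [← QuotientGroup.eq_one_iff, QuotientGroup.mk_pow, hn_eq, ← QuotientGroup.mk_pow, hxnk,
      QuotientGroup.mk_one]
  obtain ⟨j, hj⟩ := hP ⟨_, hnkP⟩
  refine ⟨k + j, Subtype.ext ?_⟩
  simpa [pow_add, pow_mul] using congrArg Subtype.val hj

theorem eq_of_isPGroup_of_normal_isPGroup (h : IsEqualOrderPair N) {p q : ℕ} [Fact p.Prime]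
    [Fact q.Prime] (hN : IsPGroup p N) {P : Subgroup G} [P.Normal] (hP : IsPGroup q P)
    (hP_ne_bot : P ≠ ⊥) : q = p := by
  by_cases hPN : P ≤ N
  · exact hP.eq_of_ne_bot (hN.to_le hPN) hP_ne_bot
  · obtain ⟨x, hxP, hxN⟩ := SetLike.not_le_iff_exists.mp hPN
    exact (h.isPGroup_of_mem_normal_isPGroup hP hxP hxN).eq_of_ne_bot hN h.2.1

variable [Finite G]

theorem exists_isPGroup_of_not_le (h : IsEqualOrderPair N) {M : Subgroup G} [M.Normal]
    [Group.IsNilpotent M] (hMN : ¬ M ≤ N) : ∃ p, p.Prime ∧ IsPGroup p N := by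
  obtain ⟨p, hp, P, _, hP, hPN⟩ := Subgroup.exists_normal_isPGroup_not_le hMN
  obtain ⟨x, hxP, hxN⟩ := SetLike.not_le_iff_exists.mp hPN
  exact ⟨p, hp, h.isPGroup_of_mem_normal_isPGroup hP hxP hxN⟩

theorem isPGroup_of_isNilpotent (h : IsEqualOrderPair N) {p : ℕ} (hp : p.Prime)
    (hN : IsPGroup p N) (M : Subgroup G) [M.Normal] [Group.IsNilpotent M] : IsPGroup p M := by
  have : Fact p.Prime := ⟨hp⟩
  refine IsPGroup.of_card
    (Nat.eq_prime_pow_of_unique_prime_dvd Nat.card_pos.ne' fun {q} hq hqM ↦ ?_)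
  have : Fact q.Prime := ⟨hq⟩
  obtain ⟨Q⟩ : Nonempty (Sylow q M) := inferInstance
  have := Q.normal_map_subtype_of_isNilpotent
  refine h.eq_of_isPGroup_of_normal_isPGroup hN (Q.isPGroup'.map M.subtype) ?_
  rw [Ne, Subgroup.map_eq_bot_iff_of_injective _ M.subtype_injective]
  exact Q.ne_bot_of_dvd_card hqM

end IsEqualOrderPair

theorem stmt10 {G : Type*} [Group G] [Finite G] (N : Subgroup G)
    (h : IsEqualOrderPair N) :
    (Group.IsNilpotent ↥N ∨
      ∀ M : Subgroup G, M.Normal → Group.IsNilpotent ↥M → M ≤ N) ∧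
    (Group.IsNilpotent ↥N →
      (∃ M : Subgroup G, M.Normal ∧ Group.IsNilpotent ↥M ∧ ¬ M ≤ N) →
      ∃ p : ℕ, p.Prime ∧
        ∀ M : Subgroup G, M.Normal → Group.IsNilpotent ↥M → IsPGroup p ↥M) := by
  constructor
  · by_cases hall : ∀ M : Subgroup G, M.Normal → Group.IsNilpotent ↥M → M ≤ N
    · exact Or.inr hall
    · push Not at hall
      obtain ⟨M, _, _, hMN⟩ := hall
      obtain ⟨p, hp, hN⟩ := h.exists_isPGroup_of_not_le hMN
      have : Fact p.Prime := ⟨hp⟩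
      exact Or.inl hN.isNilpotent
  · rintro - ⟨M, _, _, hMN⟩
    obtain ⟨p, hp, hN⟩ := h.exists_isPGroup_of_not_le hMN
    exact ⟨p, hp, fun M' _ _ ↦ h.isPGroup_of_isNilpotent hp hN M'⟩
end

section
/- Let (G,N) be an equal order pair and p a prime. Assume that a Sylow p-subgroup P of G is not contained in N and that N is not a p-group. Then (PN, P, P ∩ N) is a Frobenius–Wielandt triple; that is, for every g in the subgroup PN with g ∉ P, the intersection P ∩ gPg⁻¹ is contained in P ∩ N. -/
open Pointwise

theorem stmt11 {G : Type*} [Group G] [Finite G] (N : Subgroup G)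
    (h : IsEqualOrderPair N) (p : ℕ) (hp : p.Prime) (P : Sylow p G)
    (hPN : ¬ (P : Subgroup G) ≤ N) (hNp : ¬ IsPGroup p ↥N) :
    ∀ g ∈ (P : Subgroup G) ⊔ N, g ∉ (P : Subgroup G) →
      ∀ x ∈ (P : Subgroup G), g⁻¹ * x * g ∈ (P : Subgroup G) → x ∈ N := by
  classical
  haveI hNnormal : N.Normal := h.1
  haveI : Fact p.Prime := ⟨hp⟩
  intro g hgK hgP x hxP hconj
  by_contra hxN
  set K : Subgroup G := (P : Subgroup G) ⊔ N with hK
  have hPK : (P : Subgroup G) ≤ K := le_sup_left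
  have hNK : N ≤ K := le_sup_right
  haveI : Fintype ↥K := Fintype.ofFinite _
  haveI : Fintype (Sylow p ↥K) := Fintype.ofFinite _
  set P₀ : Sylow p ↥K := P.subtype hPK with hP₀def
  have hP₀ : (P₀ : Subgroup ↥K) = (P : Subgroup G).subgroupOf K := rfl
  set N₀ : Subgroup ↥K := N.subgroupOf K with hN₀def
  haveI : N₀.Normal := hNnormal.subgroupOf K
  -- every element of K not in N has p-power order, hence lies in some Sylow of K
  have hsyl : ∀ k : ↥K, (k : G) ∉ N → ∃ Q : Sylow p ↥K, k ∈ (Q : Subgroup ↥K) := by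
    intro k hk
    have hkmem : (k : G) ∈ (↑(P : Subgroup G) * ↑N : Set G) := by
      rw [← Subgroup.mul_normal]
      show (k : G) ∈ (↑((P : Subgroup G) ⊔ N) : Set G)
      rw [← hK]
      exact k.2
    obtain ⟨a, ha, m, hm, ham⟩ := hkmem
    have haN : a ∉ N := fun haN => hk (ham ▸ N.mul_mem haN hm)
    have hord : orderOf (k : G) = orderOf a := by
      rw [← ham]; exact h.2.2.2 a haN m hm
    obtain ⟨j, hj⟩ := P.2 ⟨a, ha⟩
    have hja : a ^ p ^ j = 1 := by simpa using congrArg (Subtype.val) hj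
    have hdvd : orderOf k ∣ p ^ j := by
      rw [← Subgroup.orderOf_coe, hord]
      exact orderOf_dvd_of_pow_eq_one hja
    obtain ⟨l, _, hl⟩ := (Nat.dvd_prime_pow hp).mp hdvd
    have : IsPGroup p (Subgroup.zpowers k) :=
      IsPGroup.of_card (by rw [Nat.card_zpowers, hl])
    obtain ⟨Q, hQ⟩ := this.exists_le_sylow
    exact ⟨Q, hQ (Subgroup.mem_zpowers k)⟩
  let σ : {k : ↥K // (k : G) ∉ N} → Sylow p ↥K := fun k => (hsyl k.1 k.2).choose
  have hσ : ∀ k : {k : ↥K // (k : G) ∉ N}, k.1 ∈ ((σ k : Sylow p ↥K) : Subgroup ↥K) :=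
    fun k => (hsyl k.1 k.2).choose_spec
  -- cardinalities
  set a : ℕ := Nat.card ↥((P : Subgroup G) ⊓ N) with ha
  set b : ℕ := Nat.card ↥(P : Subgroup G) with hb
  set i : ℕ := (P₀ : Subgroup ↥K).index with hi
  set s₀ : ℕ := Nat.card (Sylow p ↥K) with hs₀
  set j : ℕ := N₀.index with hj
  have hcardP₀ : Nat.card (P₀ : Subgroup ↥K) = b :=
    Nat.card_congr (Subgroup.subgroupOfEquivOfLe hPK).toEquiv
  have hinf : (P₀ : Subgroup ↥K) ⊓ N₀ = ((P : Subgroup G) ⊓ N).subgroupOf K := by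
    ext k
    simp [hP₀, hN₀def, Subgroup.mem_subgroupOf]
  have hcardinf : Nat.card ↥((P₀ : Subgroup ↥K) ⊓ N₀) = a := by
    rw [hinf]
    exact Nat.card_congr (Subgroup.subgroupOfEquivOfLe (le_trans inf_le_left hPK)).toEquiv
  have hcardN₀ : Nat.card N₀ = Nat.card ↥N :=
    Nat.card_congr (Subgroup.subgroupOfEquivOfLe hNK).toEquiv
  have hKcard : b * i = Nat.card ↥K := by
    rw [← hcardP₀, hi]; exact Subgroup.card_mul_index _
  have hNcard : Nat.card ↥N * j = Nat.card ↥K := by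
    rw [← hcardN₀, hj]; exact Subgroup.card_mul_index _
  -- second isomorphism theorem : a * j = b
  have haj : a * j = b := by
    have hT : N.subgroupOf (P : Subgroup G)
        = ((P : Subgroup G) ⊓ N).subgroupOf (P : Subgroup G) := by
      ext k; simp [Subgroup.mem_subgroupOf]
    have hTcard : Nat.card (N.subgroupOf (P : Subgroup G)) = a := by
      rw [hT, ha]
      exact Nat.card_congr (Subgroup.subgroupOfEquivOfLe inf_le_left).toEquiv
    have hTindex : (N.subgroupOf (P : Subgroup G)).index = j := by
      rw [hj, Subgroup.index_eq_card, Subgroup.index_eq_card]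
      exact Nat.card_congr
        (QuotientGroup.quotientInfEquivProdNormalQuotient (P : Subgroup G) N).toEquiv
    have := Subgroup.card_mul_index (N.subgroupOf (P : Subgroup G))
    rw [hTcard, hTindex] at this
    exact this
  have hjne : j ≠ 0 := by rw [hj]; exact Subgroup.index_ne_zero_of_finite
  have hine : i ≠ 0 := by rw [hi]; exact Subgroup.index_ne_zero_of_finite
  have hapos : 0 < a := by rw [ha]; exact Nat.card_pos
  have hj1 : j ≠ 1 := by
    intro h1
    have hN₀top : N₀ = ⊤ := Subgroup.index_eq_one.mp (by rw [← hj]; exact h1)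
    apply hPN
    intro y hy
    have : (⟨y, hPK hy⟩ : ↥K) ∈ N₀ := hN₀top ▸ Subgroup.mem_top _
    exact Subgroup.mem_subgroupOf.mp this
  have hj2 : 2 ≤ j := by omega
  have hba : a < b := by
    have h2a : a * 2 ≤ a * j := Nat.mul_le_mul_left a hj2
    omega
  have hNa : Nat.card ↥N = a * i := by
    have h1 : (a * i) * j = Nat.card ↥N * j := by
      rw [mul_comm a i, mul_assoc, haj, mul_comm i b, hKcard, hNcard]
    exact (Nat.eq_of_mul_eq_mul_right (Nat.pos_of_ne_zero hjne) h1).symm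
  -- the cardinality of the complement of N in K
  have hcardB : Nat.card {k : ↥K // (k : G) ∉ N} = b * i - a * i := by
    have e1 : {k : ↥K // (k : G) ∈ N} ≃ ↥N₀ :=
      Equiv.subtypeEquivRight (fun k => (Subgroup.mem_subgroupOf).symm)
    rw [Nat.card_eq_fintype_card]
    calc Fintype.card {k : ↥K // (k : G) ∉ N}
        = Fintype.card ↥K - Fintype.card {k : ↥K // (k : G) ∈ N} :=
          Fintype.card_subtype_compl _
      _ = b * i - a * i := by
          rw [← Nat.card_eq_fintype_card, ← Nat.card_eq_fintype_card,
            Nat.card_congr e1, hKcard, hcardN₀, hNa]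
  -- fiber counts
  have hfiber : ∀ Q : Sylow p ↥K,
      Nat.card {k : ↥K // k ∈ (Q : Subgroup ↥K) ∧ (k : G) ∉ N} = b - a := by
    intro Q
    obtain ⟨γ, hγ⟩ := MulAction.exists_smul_eq ↥K P₀ Q
    have hQcoe : (Q : Subgroup ↥K) = MulAut.conj γ • (P₀ : Subgroup ↥K) := by
      rw [← hγ]; rfl
    have hcardQ : Nat.card (Q : Subgroup ↥K) = b := by
      rw [hQcoe, ← hcardP₀]
      exact Nat.card_congr (Subgroup.equivSMul _ _).toEquiv.symm
    have hQN : (Q : Subgroup ↥K) ⊓ N₀ = MulAut.conj γ • ((P₀ : Subgroup ↥K) ⊓ N₀) := by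
      rw [Subgroup.smul_inf, Subgroup.Normal.conj_smul_eq_self γ N₀, hQcoe]
    have hcardQN : Nat.card ↥((Q : Subgroup ↥K) ⊓ N₀) = a := by
      rw [hQN, ← hcardinf]
      exact Nat.card_congr (Subgroup.equivSMul _ _).toEquiv.symm
    have e2 : {k : ↥K // k ∈ (Q : Subgroup ↥K) ∧ (k : G) ∉ N} ≃
        {q : ↥(Q : Subgroup ↥K) // ((q : ↥K) : G) ∉ N} :=
      (Equiv.subtypeSubtypeEquivSubtypeInter
        (· ∈ (Q : Subgroup ↥K)) (fun k : ↥K => (k : G) ∉ N)).symm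
    have e3 : {q : ↥(Q : Subgroup ↥K) // ((q : ↥K) : G) ∈ N} ≃ ↥((Q : Subgroup ↥K) ⊓ N₀) :=
      { toFun := fun q => ⟨q.1.1, Subgroup.mem_inf.mpr ⟨q.1.2, Subgroup.mem_subgroupOf.mpr q.2⟩⟩
        invFun := fun k => ⟨⟨k.1, (Subgroup.mem_inf.mp k.2).1⟩,
          Subgroup.mem_subgroupOf.mp (Subgroup.mem_inf.mp k.2).2⟩
        left_inv := fun _ => rfl
        right_inv := fun _ => rfl }
    rw [Nat.card_congr e2, Nat.card_eq_fintype_card]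
    calc Fintype.card {q : ↥(Q : Subgroup ↥K) // ((q : ↥K) : G) ∉ N}
        = Fintype.card ↥(Q : Subgroup ↥K)
            - Fintype.card {q : ↥(Q : Subgroup ↥K) // ((q : ↥K) : G) ∈ N} :=
          Fintype.card_subtype_compl _
      _ = b - a := by
          rw [← Nat.card_eq_fintype_card, ← Nat.card_eq_fintype_card,
            Nat.card_congr e3, hcardQ, hcardQN]
  -- counting pairs
  have hcardS : Nat.card {qk : Sylow p ↥K × ↥K //
      qk.2 ∈ (qk.1 : Subgroup ↥K) ∧ ((qk.2 : G)) ∉ N} = s₀ * (b - a) := by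
    have e := Equiv.subtypeProdEquivSigmaSubtype
      (fun (Q : Sylow p ↥K) (k : ↥K) => k ∈ (Q : Subgroup ↥K) ∧ (k : G) ∉ N)
    rw [Nat.card_congr e, Nat.card_eq_fintype_card, Fintype.card_sigma]
    have hQc : ∀ Q : Sylow p ↥K,
        Fintype.card {k : ↥K // k ∈ (Q : Subgroup ↥K) ∧ (k : G) ∉ N} = b - a := fun Q => by
      rw [← Nat.card_eq_fintype_card]; exact hfiber Q
    simp only [hQc]
    rw [Finset.sum_const, Finset.card_univ, smul_eq_mul, hs₀, Nat.card_eq_fintype_card]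
  -- the injection
  let φ : {k : ↥K // (k : G) ∉ N} → {qk : Sylow p ↥K × ↥K //
      qk.2 ∈ (qk.1 : Subgroup ↥K) ∧ ((qk.2 : G)) ∉ N} := fun k => ⟨(σ k, k.1), ⟨hσ k, k.2⟩⟩
  have hφ : Function.Injective φ := by
    intro k k' hkk'
    have : k.1 = k'.1 := congrArg (fun z => z.1.2) hkk'
    exact Subtype.ext this
  have hBS := Nat.card_le_card_of_injective φ hφ
  rw [hcardB, hcardS] at hBS
  -- deduce s₀ = i
  have hba0 : 0 < b - a := Nat.sub_pos_of_lt hba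
  have hineq : (b - a) * i ≤ (b - a) * s₀ := by
    rw [← Nat.sub_mul, mul_comm s₀ (b - a)] at hBS
    exact hBS
  have his : i ≤ s₀ := Nat.le_of_mul_le_mul_left hineq hba0
  have hsi : s₀ ≤ i := by
    rw [hs₀, hi]
    exact Nat.le_of_dvd (Nat.pos_of_ne_zero (hi ▸ hine)) (Sylow.card_dvd_index P₀)
  have hseq : s₀ = i := le_antisymm hsi his
  -- normalizer of P₀ is P₀
  have hnorm : Subgroup.normalizer ((P₀ : Subgroup ↥K) : Set ↥K) = (P₀ : Subgroup ↥K) := by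
    have h1 : s₀ = (Subgroup.normalizer ((P₀ : Subgroup ↥K) : Set ↥K)).index := by
      rw [hs₀]; exact Sylow.card_eq_index_normalizer P₀
    have h2 := Subgroup.relIndex_mul_index
      (Subgroup.le_normalizer : (P₀ : Subgroup ↥K) ≤ Subgroup.normalizer ((P₀ : Subgroup ↥K) : Set ↥K))
    rw [← h1, hseq, ← hi] at h2
    have h2' : (P₀ : Subgroup ↥K).relIndex (Subgroup.normalizer ((P₀ : Subgroup ↥K) : Set ↥K)) * i = 1 * i := by
      rw [one_mul]; exact h2
    have h3 := Nat.eq_of_mul_eq_mul_right (Nat.pos_of_ne_zero hine) h2'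
    exact le_antisymm (Subgroup.relIndex_eq_one.mp h3) Subgroup.le_normalizer
  -- the endgame
  set g₀ : ↥K := ⟨g, hgK⟩ with hg₀
  set x₀ : ↥K := ⟨x, hPK hxP⟩ with hx₀
  have hx₀P : x₀ ∈ (P₀ : Subgroup ↥K) := Subgroup.mem_subgroupOf.mpr hxP
  set Q : Sylow p ↥K := g₀ • P₀ with hQdef
  have hx₀Q : x₀ ∈ (Q : Subgroup ↥K) := by
    rw [hQdef, Sylow.coe_subgroup_smul, Subgroup.mem_pointwise_smul_iff_inv_smul_mem]
    have hcs : (MulAut.conj g₀)⁻¹ • x₀ = g₀⁻¹ * x₀ * g₀ := by simp [MulAut.smul_def]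
    rw [hcs]
    exact Subgroup.mem_subgroupOf.mpr hconj
  by_cases hQP : Q = P₀
  · -- g₀ normalizes P₀, hence lies in P₀
    have : g₀ ∈ Subgroup.normalizer ((P₀ : Subgroup ↥K) : Set ↥K) := Sylow.smul_eq_iff_mem_normalizer.mp hQP
    rw [hnorm] at this
    exact hgP (Subgroup.mem_subgroupOf.mp this)
  · -- strict inequality : an extra pair
    set xB : {k : ↥K // (k : G) ∉ N} := ⟨x₀, hxN⟩ with hxB
    set Q' : Sylow p ↥K := if σ xB = P₀ then Q else P₀ with hQ'
    have hQ'mem : x₀ ∈ (Q' : Subgroup ↥K) := by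
      rw [hQ']; split
      · exact hx₀Q
      · exact hx₀P
    have hQ'ne : Q' ≠ σ xB := by
      rw [hQ']; split
      · rename_i hcase; rw [hcase]; exact hQP
      · rename_i hcase; exact fun hc => hcase hc.symm
    let ψ : Option {k : ↥K // (k : G) ∉ N} → {qk : Sylow p ↥K × ↥K //
        qk.2 ∈ (qk.1 : Subgroup ↥K) ∧ ((qk.2 : G)) ∉ N} :=
      fun o => o.elim ⟨(Q', x₀), ⟨hQ'mem, hxN⟩⟩ φ
    have hψ : Function.Injective ψ := by
      intro o o' hoo'
      cases o with
      | none => cases o' with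
        | none => rfl
        | some k =>
        exfalso
        have h1 : Q' = σ k := congrArg (fun z => z.1.1) hoo'
        have h2 : x₀ = k.1 := congrArg (fun z => z.1.2) hoo'
        have hk : k = xB := Subtype.ext h2.symm
        rw [hk] at h1
        exact hQ'ne h1
      | some k => cases o' with
        | some k' => exact congrArg some (hφ hoo')
        | none =>
        exfalso
        have h1 : σ k = Q' := congrArg (fun z => z.1.1) hoo'
        have h2 : k.1 = x₀ := congrArg (fun z => z.1.2) hoo'
        have hk : k = xB := Subtype.ext h2
        rw [hk] at h1
        exact hQ'ne h1.symm
    have hle := Nat.card_le_card_of_injective ψ hψ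
    have hcardO : Nat.card (Option {k : ↥K // (k : G) ∉ N})
        = Nat.card {k : ↥K // (k : G) ∉ N} + 1 := by
      rw [Nat.card_eq_fintype_card, Nat.card_eq_fintype_card, Fintype.card_option]
    rw [hcardO, hcardB, hcardS, hseq] at hle
    have hfin : i * (b - a) = b * i - a * i := by rw [mul_comm]; exact Nat.sub_mul b a i
    omega
end

section
/- Let (G,N) be an equal order pair. If M is a nontrivial subgroup of G such that M ∩ N = 1 and every element of M commutes with every element of N, then there is a prime p such that both M and N are p-groups, and moreover n^p = 1 for every n ∈ N (N has exponent p). -/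
section

variable {G : Type*} [Group G]

theorem orderOf_dvd_of_commute_of_orderOf_mul_eq {x y : G} (hc : Commute x y)
    (h : orderOf (x * y) = orderOf x) : orderOf y ∣ orderOf x := by
  have hpow : (x * y) ^ orderOf x = 1 := h ▸ pow_orderOf_eq_one _
  rw [hc.mul_pow, pow_orderOf_eq_one, one_mul] at hpow
  exact orderOf_dvd_of_pow_eq_one hpow

theorem IsPGroup.of_dvd_orderOf [Finite G] {p : ℕ} (hp : p.Prime)
    (h : ∀ g : G, g ≠ 1 → p ∣ orderOf g) : IsPGroup p G := by
  rw [isPGroup_iff_primeFactors_card_subset hp.ne_zero, hp.primeFactors]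
  intro q hq
  obtain ⟨hq, hqdvd, -⟩ := Nat.mem_primeFactors.mp hq
  have := Fact.mk hq
  obtain ⟨g, hg⟩ := exists_prime_orderOf_dvd_card' q hqdvd
  have hg1 : g ≠ 1 := by
    rintro rfl
    exact hq.one_lt.ne (orderOf_one.symm.trans hg)
  rw [Finset.mem_singleton, ← (Nat.prime_dvd_prime_iff_eq hp hq).mp (hg ▸ h g hg1)]

theorem Subgroup.isPGroup_of_dvd_orderOf [Finite G] {H : Subgroup G} {p : ℕ} (hp : p.Prime)
    (h : ∀ g ∈ H, g ≠ 1 → p ∣ orderOf g) : IsPGroup p H :=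
  .of_dvd_orderOf hp fun g hg ↦ by
    simpa only [Subgroup.orderOf_coe] using h g g.2 (by simpa only [ne_eq, OneMemClass.coe_eq_one])

theorem Subgroup.exists_prime_orderOf_eq_of_ne_bot [Finite G] {H : Subgroup G} (hH : H ≠ ⊥) :
    ∃ p, p.Prime ∧ ∃ g ∈ H, orderOf g = p := by
  obtain ⟨p, hp, hpdvd⟩ := Nat.exists_prime_and_dvd (mt Subgroup.card_eq_one.mp hH)
  have := Fact.mk hp
  obtain ⟨g, hg⟩ := exists_prime_orderOf_dvd_card' p hpdvd
  exact ⟨p, hp, g, g.2, by rwa [Subgroup.orderOf_coe]⟩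

theorem IsEqualOrderPair.orderOf_dvd_of_inf_eq_bot {N M : Subgroup G} (h : IsEqualOrderPair N)
    (hMN : M ⊓ N = ⊥) (hcomm : ∀ m ∈ M, ∀ n ∈ N, m * n = n * m)
    {m n : G} (hm : m ∈ M) (hm1 : m ≠ 1) (hn : n ∈ N) : orderOf n ∣ orderOf m := by
  have hmN : m ∉ N := fun hmN ↦ hm1 (Subgroup.mem_bot.mp (hMN ▸ Subgroup.mem_inf.mpr ⟨hm, hmN⟩))
  exact orderOf_dvd_of_commute_of_orderOf_mul_eq (hcomm m hm n hn) (h.2.2.2 m hmN n hn)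

end

theorem stmt12 {G : Type*} [Group G] [Finite G] (N : Subgroup G)
    (h : IsEqualOrderPair N) (M : Subgroup G) (hMbot : M ≠ ⊥)
    (hMN : M ⊓ N = ⊥) (hcomm : ∀ m ∈ M, ∀ n ∈ N, m * n = n * m) :
    ∃ p : ℕ, p.Prime ∧ IsPGroup p ↥M ∧ IsPGroup p ↥N ∧ ∀ n ∈ N, n ^ p = 1 := by
  have hdvd : ∀ {m n : G}, m ∈ M → m ≠ 1 → n ∈ N → orderOf n ∣ orderOf m :=
    h.orderOf_dvd_of_inf_eq_bot hMN hcomm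
  obtain ⟨p, hp, m₀, hm₀M, hm₀⟩ := Subgroup.exists_prime_orderOf_eq_of_ne_bot hMbot
  have hm₀1 : m₀ ≠ 1 := fun h1 ↦ hp.ne_one (by rw [← hm₀, h1, orderOf_one])
  have hNexp : ∀ n ∈ N, n ^ p = 1 := fun n hn ↦
    orderOf_dvd_iff_pow_eq_one.mp (hm₀ ▸ hdvd hm₀M hm₀1 hn)
  obtain ⟨n₀, hn₀N, hn₀1⟩ := N.bot_or_exists_ne_one.resolve_left h.2.1
  have hn₀ : orderOf n₀ = p :=
    ((Nat.dvd_prime hp).mp (orderOf_dvd_of_pow_eq_one (hNexp n₀ hn₀N))).resolve_left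
      (mt orderOf_eq_one_iff.mp hn₀1)
  refine ⟨p, hp, ?_, ?_, hNexp⟩
  · exact Subgroup.isPGroup_of_dvd_orderOf hp fun m hm hm1 ↦ hn₀ ▸ hdvd hm hm1 hn₀N
  · exact fun n ↦ ⟨1, Subtype.ext (by simpa using hNexp n n.2)⟩
end

section
/- Let (G,N) be an equal order pair such that N is nilpotent, let p be a prime dividing the order of N, and let P be the (unique, hence normal in G) Sylow p-subgroup of N. Let Φ(P) denote the Frattini subgroup of P. If x ∈ G \ N is an element whose coset xN has order in G/N coprime to p (i.e., xN is a nontrivial p'-element of G/N), then for every v ∈ P with x⁻¹·v·x·v⁻¹ ∈ Φ(P), one has v ∈ Φ(P); that is, xN has no nontrivial fixed points on P/Φ(P). -/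
theorem coprime_orderOf_of_forall_orderOf_mul_eq {G : Type*} [Group G] {N : Subgroup G}
    [N.Normal] {x : G} (hfin : IsOfFinOrder x) (hxN : ∀ n ∈ N, orderOf (x * n) = orderOf x)
    {p : ℕ} (hp : p.Prime) (hxp : (orderOf (x : G ⧸ N)).Coprime p) :
    (orderOf x).Coprime p := by
  rw [Nat.coprime_comm, hp.coprime_iff_not_dvd]
  intro hpx
  obtain ⟨k, hkN, hkp⟩ := Nat.chineseRemainder hxp 0 (p - 1)
  have hxkN : x ^ k ∈ N := by
    rw [← QuotientGroup.eq_one_iff, QuotientGroup.mk_pow]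
    exact orderOf_dvd_iff_pow_eq_one.mp (Nat.modEq_zero_iff_dvd.mp hkN)
  have hpk : p ∣ k + 1 := by
    have := (hkp.add_right 1).trans (by rw [Nat.sub_add_cancel hp.one_le])
    exact Nat.modEq_zero_iff_dvd.mp (this.trans (Nat.modEq_zero_iff_dvd.mpr dvd_rfl))
  have horder : orderOf x / (orderOf x).gcd (k + 1) = orderOf x := by
    rw [← orderOf_pow' x k.succ_ne_zero, pow_succ', hxN _ hxkN]
  have hgcd : 1 < (orderOf x).gcd (k + 1) :=
    hp.one_lt.trans_le (Nat.le_of_dvd (Nat.gcd_pos_of_pos_right _ k.succ_pos)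
      (Nat.dvd_gcd hpx hpk))
  exact (Nat.div_lt_self hfin.orderOf_pos hgcd).ne horder

theorem Subgroup.Normal.mem_of_conj_mul_inv_mem {G : Type*} [Group G] {Q : Subgroup G}
    (hQ : Q.Normal) {x v : G} (hxv : x⁻¹ * v * x * v⁻¹ ∈ Q)
    (horder : orderOf (x * v) = orderOf x) (hcop : (orderOf x).Coprime (orderOf v)) :
    v ∈ Q := by
  have hcomm : Commute (x : G ⧸ Q) v := by
    have h : ((x⁻¹ * v * x * v⁻¹ : G) : G ⧸ Q) = 1 := (QuotientGroup.eq_one_iff _).mpr hxv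
    rw [← Commute.inv_left_iff, ← commutatorElement_eq_one_iff_commute, commutatorElement_def,
      inv_inv]
    simpa only [QuotientGroup.mk_mul, QuotientGroup.mk_inv] using h
  have hvm : (v : G ⧸ Q) ^ orderOf x = 1 := by
    have hxm : (x : G ⧸ Q) ^ orderOf x = 1 :=
      orderOf_dvd_iff_pow_eq_one.mp (orderOf_map_dvd (QuotientGroup.mk' Q) x)
    have h := congrArg ((↑) : G → G ⧸ Q) (horder ▸ pow_orderOf_eq_one (x * v))
    rwa [QuotientGroup.mk_pow, QuotientGroup.mk_mul, hcomm.mul_pow, hxm,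
      QuotientGroup.mk_one, one_mul] at h
  rw [← QuotientGroup.eq_one_iff, ← orderOf_eq_one_iff]
  exact Nat.eq_one_of_dvd_coprimes hcop (orderOf_dvd_of_pow_eq_one hvm)
    (orderOf_map_dvd (QuotientGroup.mk' Q) v)

theorem stmt16_general {G : Type*} [Group G] [Finite G] (N : Subgroup G) [N.Normal]
    (hEOP : IsEqualOrderPair N)
    (p : ℕ) (hp : p.Prime)
    (P : Subgroup G) (hPle : P ≤ N) (hPp : IsPGroup p ↥P) (hPnormal : P.Normal)
    (x : G) (hx : x ∉ N)
    (hx' : Nat.Coprime (orderOf (QuotientGroup.mk x : G ⧸ N)) p) :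
    ∀ v ∈ P, x⁻¹ * v * x * v⁻¹ ∈ (frattini ↥P).map P.subtype →
      v ∈ (frattini ↥P).map P.subtype := by
  intro v hv hxv
  have : Fact p.Prime := ⟨hp⟩
  have hxN := hEOP.2.2.2 x hx
  have hxp : (orderOf x).Coprime p :=
    coprime_orderOf_of_forall_orderOf_mul_eq (isOfFinOrder_of_finite x) hxN hp hx'
  obtain ⟨t, hvt⟩ := IsPGroup.iff_orderOf.mp hPp ⟨v, hv⟩
  rw [Subgroup.orderOf_mk] at hvt
  exact Subgroup.Normal.mem_of_conj_mul_inv_mem inferInstance hxv (hxN v (hPle hv))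
    (hvt ▸ hxp.pow_right t)

theorem stmt16 {G : Type*} [Group G] [Finite G] (N : Subgroup G) [N.Normal]
    (hEOP : IsEqualOrderPair N) (hNnil : Group.IsNilpotent ↥N)
    (p : ℕ) (hp : p.Prime) (hpN : p ∣ Nat.card N)
    (P : Subgroup G) (hPle : P ≤ N) (hPp : IsPGroup p ↥P) (hPnormal : P.Normal)
    (hPmax : ∀ Q : Subgroup G, Q ≤ N → IsPGroup p ↥Q → Q ≤ P)
    (x : G) (hx : x ∉ N)
    (hx' : Nat.Coprime (orderOf (QuotientGroup.mk x : G ⧸ N)) p) :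
    ∀ v ∈ P, x⁻¹ * v * x * v⁻¹ ∈ (frattini ↥P).map P.subtype →
      v ∈ (frattini ↥P).map P.subtype :=
  stmt16_general N hEOP p hp P hPle hPp hPnormal x hx hx'
end
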